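/- A nonconstant harmonic function of finite energy on an infinite network does not belong to ℓ^p(V) for any 1 ≤ p < ∞ (no representative h + k lies in ℓ^p). -/

import Mathlib

/-!
If `|h + k|^p` is summable then `h + k → 0` along the cofinite filter. A function tending to `0`
that is positive somewhere attains its maximum, and at a maximum point of a harmonic function `u`
the nonnegative terms `c x y * (u x - u y)` of the vanishing sum (summable, as `u` is bounded
below) are all zero, so the maximum spreads along edges and, by connectedness, to the whole
network. Applying this to `h + k` or to its negative shows that `h + k` is constant.
-/

def FinEnergy {V : Type*} (c : V → V → ℝ) (u : V → ℝ) : Prop :=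
  Summable (fun p : V × V => c p.1 p.2 * (u p.1 - u p.2) * (u p.1 - u p.2))

open Filter Topology

lemma tendsto_cofinite_zero_of_summable_abs_rpow {α : Type*} {f : α → ℝ} {p : ℝ} (hp : 0 < p)
    (hs : Summable fun x => |f x| ^ p) : Tendsto f cofinite (𝓝 0) := by
  have hroot : Tendsto (fun x => (|f x| ^ p) ^ p⁻¹) cofinite (𝓝 ((0 : ℝ) ^ p⁻¹)) :=
    hs.tendsto_cofinite_zero.rpow_const (Or.inr (inv_nonneg.mpr hp.le))
  rw [Real.zero_rpow (inv_ne_zero hp.ne')] at hroot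
  simp only [Real.rpow_rpow_inv (abs_nonneg _) hp.ne'] at hroot
  exact (tendsto_zero_iff_abs_tendsto_zero f).mpr hroot

lemma exists_forall_le_of_tendsto_cofinite {α β : Type*} [LinearOrder β] [TopologicalSpace β]
    [OrderTopology β] {u : α → β} {b : β} (hu : Tendsto u cofinite (𝓝 b)) {a : α}
    (ha : b < u a) : ∃ x₀, ∀ y, u y ≤ u x₀ := by
  have hfin : {x | u a ≤ u x}.Finite := by
    simpa only [not_lt] using eventually_cofinite.mp (hu.eventually_lt_const ha)
  obtain ⟨x₀, hx₀, hmax⟩ := Set.exists_max_image _ u hfin ⟨a, le_refl (u a)⟩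
  refine ⟨x₀, fun y => ?_⟩
  rcases le_total (u a) (u y) with hy | hy
  · exact hmax y hy
  · exact hy.trans hx₀

def IsHarmonic {V : Type*} (c : V → V → ℝ) (u : V → ℝ) : Prop :=
  ∀ x, ∑' y, c x y * (u x - u y) = 0

namespace IsHarmonic

variable {V : Type*} {c : V → V → ℝ} {u : V → ℝ}

lemma add_const (hu : IsHarmonic c u) (k : ℝ) : IsHarmonic c fun x => u x + k := by
  intro x
  simpa only [add_sub_add_right_eq_sub] using hu x

lemma neg (hu : IsHarmonic c u) : IsHarmonic c fun x => -u x := by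
  intro x
  simp only [neg_sub_neg, ← neg_sub (u x), mul_neg, tsum_neg, hu x, neg_zero]

lemma eq_of_isMax_of_adj (hu : IsHarmonic c u) (hnonneg : ∀ x y, 0 ≤ c x y) {x y : V}
    (hrow : Summable (c x)) (hbdd : BddBelow (Set.range u)) (hmax : ∀ z, u z ≤ u x)
    (hxy : 0 < c x y) : u y = u x := by
  obtain ⟨B, hB⟩ := hbdd
  have hterm_nonneg : ∀ z, 0 ≤ c x z * (u x - u z) :=
    fun z => mul_nonneg (hnonneg x z) (sub_nonneg.mpr (hmax z))
  have hsummable : Summable fun z => c x z * (u x - u z) :=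
    (hrow.mul_right (u x - B)).of_nonneg_of_le hterm_nonneg fun z =>
      mul_le_mul_of_nonneg_left (by linarith [hB ⟨z, rfl⟩]) (hnonneg x z)
  have hterms_zero := (hasSum_zero_iff_of_nonneg hterm_nonneg).mp (hu x ▸ hsummable.hasSum)
  have hterm : c x y * (u x - u y) = 0 := congr_fun hterms_zero y
  linarith [(mul_eq_zero.mp hterm).resolve_left hxy.ne']

lemma eq_of_isMax (hu : IsHarmonic c u) (hnonneg : ∀ x y, 0 ≤ c x y)
    (hrow : ∀ x, Summable (c x))
    (hconn : ∀ x y : V, Relation.ReflTransGen (fun a b => 0 < c a b) x y)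
    (hbdd : BddBelow (Set.range u)) {x₀ : V} (hmax : ∀ z, u z ≤ u x₀) (y : V) :
    u y = u x₀ := by
  induction hconn x₀ y with
  | refl => rfl
  | tail _ hxy ih =>
    exact (hu.eq_of_isMax_of_adj hnonneg (hrow _) hbdd (ih ▸ hmax) hxy).trans ih

lemma exists_eq_const_of_tendsto_cofinite (hu : IsHarmonic c u) (hnonneg : ∀ x y, 0 ≤ c x y)
    (hrow : ∀ x, Summable (c x))
    (hconn : ∀ x y : V, Relation.ReflTransGen (fun a b => 0 < c a b) x y)
    (hlim : Tendsto u cofinite (𝓝 0)) : ∃ C, ∀ y, u y = C := by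
  by_cases! hpos : ∃ a, 0 < u a
  · obtain ⟨a, ha⟩ := hpos
    obtain ⟨x₀, hmax⟩ := exists_forall_le_of_tendsto_cofinite hlim ha
    exact ⟨u x₀, hu.eq_of_isMax hnonneg hrow hconn hlim.bddBelow_range_of_cofinite hmax⟩
  by_cases! hneg : ∃ a, u a < 0
  · obtain ⟨a, ha⟩ := hneg
    obtain ⟨x₀, hmax⟩ := exists_forall_le_of_tendsto_cofinite hlim.neg (by rwa [neg_zero, neg_pos])
    refine ⟨u x₀, fun y => neg_injective ?_⟩
    exact hu.neg.eq_of_isMax hnonneg hrow hconn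
      (by simpa using hlim.neg.bddBelow_range_of_cofinite) (by simpa using hmax) y
  exact ⟨0, fun y => le_antisymm (hpos y) (hneg y)⟩

end IsHarmonic

theorem harmonic_not_in_lp {V : Type*} (c : V → V → ℝ)
    (hnonneg : ∀ x y, 0 ≤ c x y)
    (hrow : ∀ x, Summable (c x))
    (hconn : ∀ x y : V, Relation.ReflTransGen (fun a b => 0 < c a b) x y)
    (h : V → ℝ)
    (hharm : ∀ x, ∑' y, c x y * (h x - h y) = 0)
    (hnc : ∃ a b, h a ≠ h b) :
    ∀ p : ℝ, 1 ≤ p → ∀ k : ℝ, ¬ Summable (fun x => |h x + k| ^ p) := by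
  intro p hp k hs
  have hlim := tendsto_cofinite_zero_of_summable_abs_rpow (by linarith) hs
  have hshift : IsHarmonic c fun x => h x + k := IsHarmonic.add_const hharm k
  obtain ⟨C, hC⟩ := hshift.exists_eq_const_of_tendsto_cofinite hnonneg hrow hconn hlim
  obtain ⟨a, b, hab⟩ := hnc
  exact hab (add_right_cancel ((hC a).trans (hC b).symm))
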